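/- Let f : ℝ → ℝ be C², convex, with f(0) > 0, f' ≥ 0, f(t)/t → +∞ as t → +∞, and suppose the limit L := lim_{t→+∞} f(t)f''(t)/f'(t)² exists. Then L ∈ [0,1]. -/

import Mathlib

/-!
Convexity gives `f'' ≥ 0`, and superlinearity makes `f` eventually positive, so `f f'' / f'²` is
eventually nonnegative and `L ≥ 0`. Since `f' t ≥ (f t - f 0) / t`, superlinearity forces
`f' → ∞`. Where `f' ≠ 0` the ratio `g = f / f'` has `g' = 1 - f f'' / f'²`; if `L > 1`, then `g'` is
eventually bounded above by a negative constant, so `g → -∞`, contradicting `g > 0`.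
-/

open Filter Set

lemma eventually_pos_of_tendsto_div_atTop {f : ℝ → ℝ}
    (hsuper : Tendsto (fun t => f t / t) atTop atTop) : ∀ᶠ t in atTop, 0 < f t := by
  filter_upwards [hsuper.eventually_gt_atTop 0, eventually_gt_atTop 0] with t hquot ht
  exact (div_pos_iff_of_pos_right ht).mp hquot

lemma ConvexOn.tendsto_deriv_atTop_of_superlinear {f : ℝ → ℝ} (hconv : ConvexOn ℝ univ f)
    (hdiff : Differentiable ℝ f) (hsuper : Tendsto (fun t => f t / t) atTop atTop) :
    Tendsto (deriv f) atTop atTop := by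
  have hslope : Tendsto (fun t => f t / t + -(f 0 / t)) atTop atTop := by
    refine hsuper.atTop_add (C := 0) ?_
    simpa using (tendsto_const_nhds (x := f 0)).div_atTop tendsto_id |>.neg
  refine tendsto_atTop_mono' atTop ?_ hslope
  filter_upwards [eventually_gt_atTop 0] with t ht
  have := hconv.slope_le_deriv (mem_univ 0) (mem_univ t) ht (hdiff t)
  rw [slope_def_field, sub_zero, sub_div] at this
  linarith

lemma tendsto_atBot_of_eventually_deriv_le_neg {g : ℝ → ℝ} {c : ℝ} (hc : 0 < c)
    (hg : ∀ᶠ t in atTop, DifferentiableAt ℝ g t ∧ deriv g t ≤ -c) :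
    Tendsto g atTop atBot := by
  obtain ⟨a, ha⟩ := hg.exists_forall_of_atTop
  have hline : Tendsto (fun y => g a + -c * (y - a)) atTop atBot :=
    tendsto_atBot_add_const_left _ _ <|
      (tendsto_atTop_add_const_right _ _ tendsto_id).const_mul_atTop_of_neg (neg_neg_of_pos hc)
  refine tendsto_atBot_mono' atTop ?_ hline
  filter_upwards [eventually_ge_atTop a] with y hy
  have hdiffOn : DifferentiableOn ℝ g (Ici a) := fun t ht => (ha t ht).1.differentiableWithinAt
  have := (convex_Ici a).image_sub_le_mul_sub_of_deriv_le hdiffOn.continuousOn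
    (hdiffOn.mono interior_subset) (fun t ht => (ha t (interior_subset ht)).2)
    a self_mem_Ici y hy hy
  linarith

lemma deriv_div_deriv {f : ℝ → ℝ} {t : ℝ} (hf : DifferentiableAt ℝ f t)
    (hf' : DifferentiableAt ℝ (deriv f) t) (hne : deriv f t ≠ 0) :
    deriv (fun s => f s / deriv f s) t = 1 - f t * deriv (deriv f) t / deriv f t ^ 2 := by
  rw [deriv_fun_div hf hf' hne]
  field_simp

theorem limit_ff''_over_f'sq_in_unit_interval_general (f : ℝ → ℝ) (L : ℝ)
    (hf : ContDiff ℝ 2 f) (hconv : ConvexOn ℝ Set.univ f)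
    (hsuper : Tendsto (fun t => f t / t) atTop atTop)
    (hlim : Tendsto (fun t => f t * deriv (deriv f) t / (deriv f t) ^ 2)
      atTop (nhds L)) :
    L ∈ Set.Icc (0 : ℝ) 1 := by
  have hdiff : Differentiable ℝ f := hf.differentiable (by norm_num)
  have hdiff' : Differentiable ℝ (deriv f) := hf.differentiable_deriv_two
  have hf''_nonneg : ∀ t, 0 ≤ deriv (deriv f) t := fun _ =>
    (monotoneOn_univ.mp (hconv.monotoneOn_deriv fun x _ => hdiff x)).deriv_nonneg
  have hf_pos := eventually_pos_of_tendsto_div_atTop hsuper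
  have hf'_pos := (hconv.tendsto_deriv_atTop_of_superlinear hdiff hsuper).eventually_gt_atTop 0
  refine ⟨ge_of_tendsto hlim ?_, le_of_not_gt fun hL => ?_⟩
  · filter_upwards [hf_pos] with t ht
    have := hf''_nonneg t
    positivity
  have hquot_to_bot : Tendsto (fun s => f s / deriv f s) atTop atBot := by
    refine tendsto_atBot_of_eventually_deriv_le_neg (c := (L - 1) / 2) (by linarith) ?_
    filter_upwards [hf'_pos, hlim.eventually (lt_mem_nhds (by linarith : (L + 1) / 2 < L))]
      with t hpos hquot
    refine ⟨(hdiff t).div (hdiff' t) hpos.ne', ?_⟩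
    rw [deriv_div_deriv (hdiff t) (hdiff' t) hpos.ne']
    linarith
  obtain ⟨t, hneg, hft, hf't⟩ :=
    ((hquot_to_bot.eventually_lt_atBot 0).and (hf_pos.and hf'_pos)).exists
  exact (div_pos hft hf't).not_gt hneg

/-- If f is C², convex, with f(0) > 0, f' ≥ 0, superlinear at +∞, and the limit
L of f f''/(f')² at +∞ exists, then L ∈ [0,1]. -/
theorem limit_ff''_over_f'sq_in_unit_interval (f : ℝ → ℝ) (L : ℝ)
    (hf : ContDiff ℝ 2 f) (hconv : ConvexOn ℝ Set.univ f)
    (hf0 : 0 < f 0) (hf' : ∀ t : ℝ, 0 ≤ deriv f t)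
    (hsuper : Tendsto (fun t => f t / t) atTop atTop)
    (hlim : Tendsto (fun t => f t * deriv (deriv f) t / (deriv f t) ^ 2)
      atTop (nhds L)) :
    L ∈ Set.Icc (0 : ℝ) 1 :=
  limit_ff''_over_f'sq_in_unit_interval_general f L hf hconv hsuper hlim
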